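/- arXiv:2602.18026 — 2 statements merged into one kernel-verified Lean document; each statement's English description precedes it below -/
import Mathlib

section
/- Let $\mathcal{O}$ be finite, $\gamma \in [0,1)$, and fix a policy $\pi$. Suppose rewards satisfy $|r(o,a,\mu)| \le R_{\max}$ and are $L_r$-Lipschitz in $\mu$ w.r.t. the $\ell_1$ distance $\mathcal{W}_1(\mu,\nu) = \sum_o |\mu(o)-\nu(o)|$, and transition kernels satisfy $\mathcal{W}_1(P(\cdot|o,a,\mu), P(\cdot|o,a,\mu')) \le L_P \mathcal{W}_1(\mu,\mu')$. Given two trajectories $\{\mu_t\}, \{\mu_t'\}$ in $\Delta(\mathcal{O})$ with $\max_t \mathcal{W}_1(\mu_t,\mu_t') = d$, let $V_\pi(o,\mu_t)$ and $V_\pi(o,\mu_t')$ be the bounded solutions of the Bellman equations $V_\pi(o,\mu_t) = \sum_a \pi(a|o)[r(o,a,\mu_t) + \gamma \sum_{o'} P(o'|o,a,\mu_t) V_\pi(o',\mu_{t+1})]$ along each trajectory. Then $\sup_{o,t} |V_\pi(o,\mu_t) - V_\pi(o,\mu_t')| \le \frac{L_r + \gamma L_P R_{\max}/(1-\gamma)}{1-\gamma}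 \cdot d$. -/
/-!
Comparing the Bellman equations along the two trajectories at time `t`, and splitting
`P_t V_{t+1} - P'_t V'_{t+1} = P_t (V_{t+1} - V'_{t+1}) + (P_t - P'_t) V'_{t+1}`, bounds the gap
at time `t` by `(L_r + γ L_P K) d + γ ·` (the gap at time `t + 1`), where `K = R_max / (1 - γ)`
bounds `V'`. Starting from the a priori bound `2K` and iterating this contraction `n` times leaves
the fixed point `(L_r + γ L_P K) d / (1 - γ)` plus an error of order `γⁿ K → 0`.
-/

open Finset Filter Topology

section Averages

variable {ι : Type*} [Fintype ι]

lemma abs_sum_mul_sub_sum_mul_le_of_abs_sub_le {p f g : ι → ℝ} {C : ℝ}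
    (hp0 : ∀ i, 0 ≤ p i) (hp1 : ∑ i, p i = 1) (hfg : ∀ i, |f i - g i| ≤ C) :
    |∑ i, p i * f i - ∑ i, p i * g i| ≤ C :=
  calc |∑ i, p i * f i - ∑ i, p i * g i| = |∑ i, p i * (f i - g i)| := by
        simp only [mul_sub, sum_sub_distrib]
    _ ≤ ∑ i, p i * C := (abs_sum_le_sum_abs _ _).trans <| sum_le_sum fun i _ => by
        rw [abs_mul, abs_of_nonneg (hp0 i)]
        exact mul_le_mul_of_nonneg_left (hfg i) (hp0 i)
    _ = C := by rw [← sum_mul, hp1, one_mul]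

lemma abs_sum_mul_sub_sum_mul_le {p q f g : ι → ℝ} {B K : ℝ}
    (hp0 : ∀ i, 0 ≤ p i) (hp1 : ∑ i, p i = 1)
    (hfg : ∀ i, |f i - g i| ≤ B) (hg : ∀ i, |g i| ≤ K) :
    |∑ i, p i * f i - ∑ i, q i * g i| ≤ B + (∑ i, |p i - q i|) * K := by
  have hshift : |∑ i, p i * g i - ∑ i, q i * g i| ≤ (∑ i, |p i - q i|) * K :=
    calc |∑ i, p i * g i - ∑ i, q i * g i| = |∑ i, (p i - q i) * g i| := by
          simp only [sub_mul, sum_sub_distrib]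
      _ ≤ ∑ i, |p i - q i| * K := (abs_sum_le_sum_abs _ _).trans <| sum_le_sum fun i _ => by
          rw [abs_mul]
          exact mul_le_mul_of_nonneg_left (hg i) (abs_nonneg _)
      _ = (∑ i, |p i - q i|) * K := (sum_mul _ _ _).symm
  calc |∑ i, p i * f i - ∑ i, q i * g i|
      = |(∑ i, p i * f i - ∑ i, p i * g i) + (∑ i, p i * g i - ∑ i, q i * g i)| := by ring_nf
    _ ≤ B + (∑ i, |p i - q i|) * K :=
      (abs_add_le _ _).trans <|
        add_le_add (abs_sum_mul_sub_sum_mul_le_of_abs_sub_le hp0 hp1 hfg) hshift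

/-- On a nonempty index type such a constant `L` is forced to be nonnegative, which is what
allows replacing the distance by an upper bound. -/
lemma le_mul_of_forall_le_mul_sum_abs_sub [Nonempty ι] {L d : ℝ}
    {D : (ι → ℝ) → (ι → ℝ) → ℝ} (hD0 : ∀ x y, 0 ≤ D x y)
    (hD : ∀ x y, D x y ≤ L * ∑ i, |x i - y i|) {x y : ι → ℝ}
    (hxy : ∑ i, |x i - y i| ≤ d) : D x y ≤ L * d := by
  have hL : 0 ≤ L := by
    have h := (hD0 0 1).trans (hD 0 1)
    simp only [Pi.zero_apply, Pi.one_apply, zero_sub, abs_neg, abs_one, sum_const, card_univ,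
      nsmul_eq_mul, mul_one] at h
    exact nonneg_of_mul_nonneg_left h (by exact_mod_cast Fintype.card_pos)
  exact (hD x y).trans (mul_le_mul_of_nonneg_left hxy hL)

end Averages

lemma abs_reward_add_expect_sub_le {O : Type*} [Fintype O] [Nonempty O] {γ : ℝ} (hγ0 : 0 ≤ γ)
    {ρ : (O → ℝ) → ℝ} {p : (O → ℝ) → O → ℝ} {Lr LP : ℝ}
    (hp0 : ∀ ν o, 0 ≤ p ν o) (hp1 : ∀ ν, ∑ o, p ν o = 1)
    (hρLip : ∀ ν ν', |ρ ν - ρ ν'| ≤ Lr * ∑ x, |ν x - ν' x|)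
    (hpLip : ∀ ν ν', ∑ o, |p ν o - p ν' o| ≤ LP * ∑ x, |ν x - ν' x|)
    {ν ν' : O → ℝ} {d : ℝ} (hνν' : ∑ x, |ν x - ν' x| ≤ d)
    {W W' : O → ℝ} {B K : ℝ} (hWW' : ∀ o, |W o - W' o| ≤ B) (hW' : ∀ o, |W' o| ≤ K) :
    |(ρ ν + γ * ∑ o, p ν o * W o) - (ρ ν' + γ * ∑ o, p ν' o * W' o)|
      ≤ (Lr + γ * LP * K) * d + γ * B := by
  have hK : 0 ≤ K := (abs_nonneg _).trans (hW' (Classical.arbitrary O))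
  have hρ : |ρ ν - ρ ν'| ≤ Lr * d :=
    le_mul_of_forall_le_mul_sum_abs_sub (fun _ _ => abs_nonneg _) hρLip hνν'
  have hp : ∑ o, |p ν o - p ν' o| ≤ LP * d :=
    le_mul_of_forall_le_mul_sum_abs_sub (fun _ _ => sum_nonneg fun _ _ => abs_nonneg _)
      hpLip hνν'
  have hexp : |∑ o, p ν o * W o - ∑ o, p ν' o * W' o| ≤ B + LP * d * K :=
    (abs_sum_mul_sub_sum_mul_le (hp0 ν) (hp1 ν) hWW' hW').trans <| by gcongr
  calc |(ρ ν + γ * ∑ o, p ν o * W o) - (ρ ν' + γ * ∑ o, p ν' o * W' o)|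
      = |(ρ ν - ρ ν') + γ * (∑ o, p ν o * W o - ∑ o, p ν' o * W' o)| := by ring_nf
    _ ≤ |ρ ν - ρ ν'| + γ * |∑ o, p ν o * W o - ∑ o, p ν' o * W' o| := by
      rw [← abs_of_nonneg hγ0, ← abs_mul, abs_of_nonneg hγ0]
      exact abs_add_le _ _
    _ ≤ Lr * d + γ * (B + LP * d * K) := by gcongr
    _ = (Lr + γ * LP * K) * d + γ * B := by ring

lemma le_div_one_sub_of_le_add_mul_succ {ι : Type*} {e : ι → ℕ → ℝ} {c γ M : ℝ}
    (hγ0 : 0 ≤ γ) (hγ1 : γ < 1) (hM : ∀ i t, e i t ≤ M)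
    (hstep : ∀ t B, (∀ i, e i (t + 1) ≤ B) → ∀ i, e i t ≤ c + γ * B) (i : ι) (t : ℕ) :
    e i t ≤ c / (1 - γ) := by
  have hfix : c + γ * (c / (1 - γ)) = c / (1 - γ) := by
    field_simp [(sub_pos.mpr hγ1).ne']
    ring
  set x := c / (1 - γ)
  have hiter : ∀ n i t, e i t ≤ x + γ ^ n * (M - x) := by
    intro n
    induction n with
    | zero => simpa using hM
    | succ n ih =>
      intro i t
      calc e i t ≤ c + γ * (x + γ ^ n * (M - x)) := hstep t _ (fun i => ih i (t + 1)) i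
        _ = x + γ ^ (n + 1) * (M - x) := by linear_combination hfix
  have hlim : Tendsto (fun n => x + γ ^ n * (M - x)) atTop (𝓝 (x + 0 * (M - x))) :=
    tendsto_const_nhds.add ((tendsto_pow_atTop_nhds_zero_of_lt_one hγ0 hγ1).mul_const _)
  simpa using ge_of_tendsto' hlim fun n => hiter n i t

theorem stmt1_general {O A : Type*} [Fintype O] [Fintype A]
    (γ : ℝ) (hγ0 : 0 ≤ γ) (hγ1 : γ < 1)
    (π : O → A → ℝ) (hπ0 : ∀ o a, 0 ≤ π o a) (hπ1 : ∀ o, ∑ a, π o a = 1)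
    (r : O → A → (O → ℝ) → ℝ) (Rmax : ℝ)
    (Lr : ℝ)
    (hrLip : ∀ o a ν ν', |r o a ν - r o a ν'| ≤ Lr * ∑ x, |ν x - ν' x|)
    (P : O → A → (O → ℝ) → O → ℝ)
    (hP0 : ∀ o a ν o', 0 ≤ P o a ν o') (hP1 : ∀ o a ν, ∑ o', P o a ν o' = 1)
    (LP : ℝ)
    (hPLip : ∀ o a ν ν', ∑ o', |P o a ν o' - P o a ν' o'| ≤ LP * ∑ x, |ν x - ν' x|)
    (μ μ' : ℕ → O → ℝ)
    (d : ℝ)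
    (hd : ∀ t, ∑ o, |μ t o - μ' t o| ≤ d)
    (V V' : O → ℕ → ℝ)
    (hVbd : ∀ o t, |V o t| ≤ Rmax / (1 - γ))
    (hV'bd : ∀ o t, |V' o t| ≤ Rmax / (1 - γ))
    (hV : ∀ o t, V o t = ∑ a, π o a * (r o a (μ t)
      + γ * ∑ o', P o a (μ t) o' * V o' (t + 1)))
    (hV' : ∀ o t, V' o t = ∑ a, π o a * (r o a (μ' t)
      + γ * ∑ o', P o a (μ' t) o' * V' o' (t + 1))) :
    ∀ o t, |V o t - V' o t| ≤ (Lr + γ * LP * Rmax / (1 - γ)) / (1 - γ) * d := by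
  set K := Rmax / (1 - γ)
  have hstep : ∀ t B, (∀ o, |V o (t + 1) - V' o (t + 1)| ≤ B) →
      ∀ o, |V o t - V' o t| ≤ (Lr + γ * LP * K) * d + γ * B := by
    intro t B hB o
    have : Nonempty O := ⟨o⟩
    rw [hV o t, hV' o t]
    exact abs_sum_mul_sub_sum_mul_le_of_abs_sub_le (hπ0 o) (hπ1 o) fun a =>
      abs_reward_add_expect_sub_le hγ0 (hP0 o a) (hP1 o a) (hrLip o a) (hPLip o a) (hd t) hB
        (hV'bd · (t + 1))
  have hbound : ∀ o t, |V o t - V' o t| ≤ 2 * K := fun o t => by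
    linarith [abs_sub (V o t) (V' o t), hVbd o t, hV'bd o t]
  intro o t
  refine (le_div_one_sub_of_le_add_mul_succ hγ0 hγ1 hbound hstep o t).trans_eq ?_
  ring

theorem stmt1 {O A : Type*} [Fintype O] [Fintype A]
    (γ : ℝ) (hγ0 : 0 ≤ γ) (hγ1 : γ < 1)
    (π : O → A → ℝ) (hπ0 : ∀ o a, 0 ≤ π o a) (hπ1 : ∀ o, ∑ a, π o a = 1)
    (r : O → A → (O → ℝ) → ℝ) (Rmax : ℝ)
    (hr : ∀ o a ν, |r o a ν| ≤ Rmax)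
    (Lr : ℝ)
    (hrLip : ∀ o a ν ν', |r o a ν - r o a ν'| ≤ Lr * ∑ x, |ν x - ν' x|)
    (P : O → A → (O → ℝ) → O → ℝ)
    (hP0 : ∀ o a ν o', 0 ≤ P o a ν o') (hP1 : ∀ o a ν, ∑ o', P o a ν o' = 1)
    (LP : ℝ)
    (hPLip : ∀ o a ν ν', ∑ o', |P o a ν o' - P o a ν' o'| ≤ LP * ∑ x, |ν x - ν' x|)
    (μ μ' : ℕ → O → ℝ)
    (hμΔ : ∀ t, (∀ o, 0 ≤ μ t o) ∧ ∑ o, μ t o = 1)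
    (hμ'Δ : ∀ t, (∀ o, 0 ≤ μ' t o) ∧ ∑ o, μ' t o = 1)
    (d : ℝ)
    (hd : ∀ t, ∑ o, |μ t o - μ' t o| ≤ d)
    (V V' : O → ℕ → ℝ)
    (hVbd : ∀ o t, |V o t| ≤ Rmax / (1 - γ))
    (hV'bd : ∀ o t, |V' o t| ≤ Rmax / (1 - γ))
    (hV : ∀ o t, V o t = ∑ a, π o a * (r o a (μ t)
      + γ * ∑ o', P o a (μ t) o' * V o' (t + 1)))
    (hV' : ∀ o t, V' o t = ∑ a, π o a * (r o a (μ' t)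
      + γ * ∑ o', P o a (μ' t) o' * V' o' (t + 1))) :
    ∀ o t, |V o t - V' o t| ≤ (Lr + γ * LP * Rmax / (1 - γ)) / (1 - γ) * d :=
  stmt1_general γ hγ0 hγ1 π hπ0 hπ1 r Rmax Lr hrLip P hP0 hP1 LP hPLip μ μ' d hd V V' hVbd hV'bd hV
    hV'
end

section
/- Suppose $\eta, L_V, L_\pi, R_{\max} > 0$ and $\gamma \in [0,1)$ satisfy $\eta > L_V + \frac{R_{\max} L_\pi}{(1-\gamma)^2}$. Let $\mu, \mu' \in \Delta(\mathcal{O})$ with associated value functions $V, V' : \mathcal{O} \to \mathbb{R}$ such that: (i) $\sum_o (\mu(o) - \mu'(o))(V(o) - V'(o)) \ge \eta\, \mathcal{W}_1(\mu,\mu')^2$ (monotonicity); (ii) $\|V - V'\|_\infty \le \big(L_V + \frac{R_{\max} L_\pi}{(1-\gamma)^2}\big) \mathcal{W}_1(\mu, \mu')$ (sensitivity). Then $\mu = \mu'$. -/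
open Finset

theorem stmt13 {O : Type*} [Fintype O]
    (η LV Lπ Rmax γ : ℝ) (hη : 0 < η) (hLV : 0 < LV) (hLπ : 0 < Lπ) (hR : 0 < Rmax)
    (hγ0 : 0 ≤ γ) (hγ1 : γ < 1)
    (hcond : η > LV + Rmax * Lπ / (1 - γ)^2)
    (μ μ' : O → ℝ)
    (hμ0 : ∀ o, 0 ≤ μ o) (hμ1 : ∑ o, μ o = 1)
    (hμ'0 : ∀ o, 0 ≤ μ' o) (hμ'1 : ∑ o, μ' o = 1)
    (V V' : O → ℝ)
    (hmono : η * (∑ o, |μ o - μ' o|)^2 ≤ ∑ o, (μ o - μ' o) * (V o - V' o))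
    (hsens : ∀ o, |V o - V' o| ≤ (LV + Rmax * Lπ / (1 - γ)^2) * ∑ x, |μ x - μ' x|) :
    μ = μ' := by
  set C := LV + Rmax * Lπ / (1 - γ)^2 with hC
  set d := ∑ x, |μ x - μ' x| with hd
  have hd0 : 0 ≤ d := Finset.sum_nonneg fun _ _ => abs_nonneg _
  have hCd : ∑ o, (μ o - μ' o) * (V o - V' o) ≤ C * d * d := by
    calc ∑ o, (μ o - μ' o) * (V o - V' o)
        ≤ ∑ o, |μ o - μ' o| * (C * d) := by
          apply Finset.sum_le_sum
          intro o _
          calc (μ o - μ' o) * (V o - V' o) ≤ |(μ o - μ' o) * (V o - V' o)| := le_abs_self _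
            _ = |μ o - μ' o| * |V o - V' o| := abs_mul _ _
            _ ≤ |μ o - μ' o| * (C * d) :=
              mul_le_mul_of_nonneg_left (hsens o) (abs_nonneg _)
      _ = C * d * d := by rw [← Finset.sum_mul]; ring
  have hkey : η * d ^ 2 ≤ C * d ^ 2 := by
    calc η * d ^ 2 ≤ ∑ o, (μ o - μ' o) * (V o - V' o) := hmono
      _ ≤ C * d * d := hCd
      _ = C * d ^ 2 := by ring
  have hdzero : d = 0 := by
    by_contra h
    have hd2 : 0 < d ^ 2 := by positivity
    nlinarith
  funext o
  have h := (Finset.sum_eq_zero_iff_of_nonneg (fun x _ => abs_nonneg (μ x - μ' x))).mp hdzero o (Finset.mem_univ o)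
  have := abs_eq_zero.mp h
  linarith
end
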